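/- arXiv:1305.0640 — 2 statements merged into one kernel-verified Lean document; each statement's English description precedes it below -/
import Mathlib

section
/- For every ε > 0 there is c_1 > 0 such that for all sufficiently large n, the number λ_n of closed lambda-terms of size n satisfies λ_n ≥ c_1 · (4n/(e log n))^{n/2} · √(log n)/n. -/
open Real

/-- Lambda-terms in de Bruijn notation (so terms are identified up to renaming of
bound variables). -/
inductive Lam : Type
  | var : ℕ → Lam
  | app : Lam → Lam → Lam
  | abs : Lam → Lam

/-- Size of a lambda-term: `|x| = 1`, `|λx.T| = 1 + |T|`, `|(S*T)| = 1 + |S| + |T|`. -/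
def Lam.size : Lam → ℕ
  | .var _ => 1
  | .app s t => 1 + s.size + t.size
  | .abs t => 1 + t.size

/-- `ClosedAt n t` means all free de Bruijn indices of `t` are `< n`. -/
def Lam.ClosedAt : ℕ → Lam → Prop
  | n, .var k => k < n
  | n, .app s t => s.ClosedAt n ∧ t.ClosedAt n
  | n, .abs t => t.ClosedAt (n + 1)

/-- A closed lambda-term: every variable is bound by some abstraction. -/
def Lam.Closed (t : Lam) : Prop := t.ClosedAt 0

/-- The number of closed lambda-terms of size `n`. -/
noncomputable def lambdaCount (n : ℕ) : ℕ :=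
  Nat.card {t : Lam // t.Closed ∧ t.size = n}

/-!
Putting `u` abstractions on top of an application tree with `k + 1` leaves, each leaf a variable
bound by one of the `u` abstractions, gives `C_k u^(k+1)` distinct closed terms of size
`u + 2k + 1`, hence `λ_n ≥ C_k u^(k+1) ≥ (4u)^(k+1) / (8 n²)`. Taking for `u` an integer of the
right parity just below `n / log n` makes `(4u)^((n-u)/2)` exceed the main term by a factor
`exp ((n / (2 log n)) (log log n - log 4) - O(log n))`, which absorbs all polynomial losses,
so the bound holds with `c₁ = 1`.
-/

namespace Lam

theorem finite_setOf_size_le_closedAt (n : ℕ) :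
    ∀ m, {t : Lam | t.size ≤ n ∧ t.ClosedAt m}.Finite := by
  induction n with
  | zero =>
    intro m
    convert Set.finite_empty
    ext (_ | _ | _) <;> simp [size]
  | succ n ih =>
    intro m
    refine (((Set.finite_Iio m).image var).union
      ((((ih m).prod (ih m)).image fun p => app p.1 p.2).union ((ih (m + 1)).image abs))).subset ?_
    rintro (k | ⟨s, t⟩ | t) ⟨hsize, hclosed⟩ <;> simp only [size, ClosedAt] at hsize hclosed
    · exact Or.inl ⟨k, hclosed, rfl⟩
    · refine Or.inr (Or.inl ⟨(s, t), ⟨⟨?_, hclosed.1⟩, ⟨?_, hclosed.2⟩⟩, rfl⟩) <;>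
        dsimp only <;> omega
    · exact Or.inr (Or.inr ⟨t, ⟨by omega, hclosed⟩, rfl⟩)

theorem finite_setOf_closed_size_eq (n : ℕ) : {t : Lam | t.Closed ∧ t.size = n}.Finite :=
  (finite_setOf_size_le_closedAt n 0).subset fun _ ⟨hclosed, hsize⟩ => ⟨hsize.le, hclosed⟩

theorem size_abs_iterate (k : ℕ) (t : Lam) : (abs^[k] t).size = k + t.size := by
  induction k with
  | zero => simp
  | succ k ih => rw [Function.iterate_succ_apply', size, ih]; ring

theorem closedAt_abs_iterate {m k : ℕ} {t : Lam} (h : t.ClosedAt (m + k)) :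
    (abs^[k] t).ClosedAt m := by
  induction k generalizing t with
  | zero => exact h
  | succ k ih => exact ih (t := abs t) h

theorem abs_iterate_injective (k : ℕ) : Function.Injective (abs^[k]) :=
  Function.Injective.iterate (fun _ _ => abs.inj) k

/-- The application term of shape `t` whose `j`-th leaf (from the left) is the variable `g j`. -/
def appTree : BinaryTree Unit → (ℕ → ℕ) → Lam
  | .nil, g => var (g 0)
  | .node _ l r, g => app (appTree l g) (appTree r fun j => g (l.numLeaves + j))

theorem size_appTree (t : BinaryTree Unit) (g : ℕ → ℕ) :
    (appTree t g).size + 1 = 2 * t.numLeaves := by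
  induction t generalizing g with
  | nil => rfl
  | node _ l r ihl ihr =>
    have := ihl g
    have := ihr fun j => g (l.numLeaves + j)
    simp only [appTree, size, BinaryTree.numLeaves]
    omega

theorem closedAt_appTree {m : ℕ} {g : ℕ → ℕ} (hg : ∀ j, g j < m) (t : BinaryTree Unit) :
    (appTree t g).ClosedAt m := by
  induction t generalizing g with
  | nil => exact hg 0
  | node _ l r ihl ihr => exact ⟨ihl hg, ihr fun j => hg _⟩

theorem appTree_inj {t t' : BinaryTree Unit} {g g' : ℕ → ℕ} (h : appTree t g = appTree t' g') :
    t = t' ∧ ∀ j < t.numLeaves, g j = g' j := by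
  induction t generalizing t' g g' with
  | nil =>
    cases t' with
    | nil =>
      refine ⟨rfl, fun j hj => ?_⟩
      obtain rfl : j = 0 := by simpa [BinaryTree.numLeaves] using hj
      exact var.inj h
    | node => simp [appTree] at h
  | node _ l r ihl ihr =>
    cases t' with
    | nil => simp [appTree] at h
    | node _ l' r' =>
      obtain ⟨hl, hr⟩ := app.inj h
      obtain ⟨rfl, hgl⟩ := ihl hl
      obtain ⟨rfl, hgr⟩ := ihr hr
      refine ⟨rfl, fun j hj => ?_⟩
      rcases lt_or_ge j l.numLeaves with hjl | hjl
      · exact hgl j hjl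
      · obtain ⟨i, rfl⟩ := Nat.exists_eq_add_of_le hjl
        exact hgr i (by simp only [BinaryTree.numLeaves] at hj; omega)

end Lam

open Lam in
theorem catalan_mul_pow_le_lambdaCount (u k : ℕ) :
    catalan k * u ^ (k + 1) ≤ lambdaCount (u + 2 * k + 1) := by
  have : Finite {t : Lam // t.Closed ∧ t.size = u + 2 * k + 1} :=
    (finite_setOf_closed_size_eq _).to_subtype
  have hleaves {t : BinaryTree Unit} (ht : t ∈ BinaryTree.treesOfNumNodesEq k) :
      t.numLeaves = k + 1 := by
    rw [BinaryTree.numLeaves_eq_numNodes_succ, BinaryTree.mem_treesOfNumNodesEq.mp ht]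
  let label (a : Fin (k + 1) → Fin u) (j : ℕ) : ℕ := a (Fin.ofNat (k + 1) j)
  let F (p : BinaryTree.treesOfNumNodesEq k × (Fin (k + 1) → Fin u)) :
      {t : Lam // t.Closed ∧ t.size = u + 2 * k + 1} :=
    ⟨abs^[u] (appTree p.1 (label p.2)),
      closedAt_abs_iterate (by simpa using closedAt_appTree (fun j => (p.2 _).isLt) p.1),
      by
        have := size_appTree p.1 (label p.2)
        have := hleaves p.1.2
        rw [size_abs_iterate]; omega⟩
  have hF : F.Injective := by
    rintro ⟨t, a⟩ ⟨t', a'⟩ h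
    obtain ⟨htt', ha⟩ := appTree_inj (abs_iterate_injective u (congrArg Subtype.val h))
    refine Prod.ext (Subtype.ext htt') (funext fun j => Fin.ext ?_)
    simpa [label, Fin.ofNat, Nat.mod_eq_of_lt j.isLt] using ha j (by rw [hleaves t.2]; exact j.isLt)
  calc catalan k * u ^ (k + 1)
      = Nat.card (BinaryTree.treesOfNumNodesEq k × (Fin (k + 1) → Fin u)) := by
        rw [Nat.card_prod, Nat.card_eq_finsetCard, BinaryTree.treesOfNumNodesEq_card_eq_catalan]
        simp
    _ ≤ lambdaCount (u + 2 * k + 1) := Nat.card_le_card_of_injective F hF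

theorem four_pow_succ_le_catalan (k : ℕ) : 4 ^ (k + 1) ≤ 8 * (k + 1) ^ 2 * catalan k := by
  have h := Nat.four_pow_le_two_mul_add_one_mul_central_binom k
  rw [← Nat.centralBinom_eq_two_mul_choose, ← succ_mul_catalan_eq_centralBinom] at h
  calc 4 ^ (k + 1) = 4 * 4 ^ k := pow_succ' 4 k
    _ ≤ 4 * ((2 * k + 1) * ((k + 1) * catalan k)) := Nat.mul_le_mul_left 4 h
    _ ≤ 8 * (k + 1) ^ 2 * catalan k := by nlinarith [Nat.zero_le (k * catalan k)]

theorem rpow_div_le_lambdaCount {n u k : ℕ} (hn : n = u + 2 * k + 1) (hu : 0 < u) :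
    (4 * u : ℝ) ^ (((n : ℝ) - u) / 2) / (8 * n ^ 2) ≤ lambdaCount n := by
  have hcount : (4 * u) ^ (k + 1) ≤ 8 * n ^ 2 * lambdaCount n := by
    subst hn
    calc (4 * u) ^ (k + 1) = 4 ^ (k + 1) * u ^ (k + 1) := mul_pow 4 u (k + 1)
      _ ≤ 8 * (k + 1) ^ 2 * catalan k * u ^ (k + 1) :=
        Nat.mul_le_mul_right _ (four_pow_succ_le_catalan k)
      _ ≤ 8 * (u + 2 * k + 1) ^ 2 * (catalan k * u ^ (k + 1)) := by
        rw [← mul_assoc]; gcongr; omega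
      _ ≤ 8 * (u + 2 * k + 1) ^ 2 * lambdaCount (u + 2 * k + 1) :=
        Nat.mul_le_mul_left _ (catalan_mul_pow_le_lambdaCount u k)
  have hexp : ((n : ℝ) - u) / 2 ≤ (k + 1 : ℕ) := by
    rw [hn]; push_cast; linarith
  have hbase : (1 : ℝ) ≤ 4 * u := by
    have : (1 : ℝ) ≤ u := by exact_mod_cast hu
    linarith
  have hn0 : (0 : ℝ) < n := by rw [hn]; positivity
  rw [div_le_iff₀ (by positivity)]
  calc (4 * u : ℝ) ^ (((n : ℝ) - u) / 2) ≤ (4 * u : ℝ) ^ ((k + 1 : ℕ) : ℝ) :=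
        Real.rpow_le_rpow_of_exponent_le hbase hexp
    _ = (4 * u : ℝ) ^ (k + 1) := Real.rpow_natCast _ _
    _ ≤ lambdaCount n * (8 * n ^ 2) := by rw [mul_comm (lambdaCount n : ℝ)]; exact_mod_cast hcount

theorem exists_eq_add_two_mul_add_one {n : ℕ} {r : ℝ} (h₁ : 2 ≤ r) (h₂ : r ≤ n / 2) :
    ∃ u k : ℕ, 0 < u ∧ r - 2 ≤ u ∧ (u : ℝ) ≤ r ∧ n = u + 2 * k + 1 := by
  set m := ⌊r⌋₊
  have hm_le : (m : ℝ) ≤ r := Nat.floor_le (by linarith)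
  have hm_gt : r < m + 1 := Nat.lt_floor_add_one r
  have hm : 2 ≤ m := Nat.le_floor (by exact_mod_cast h₁)
  have hmn : 2 * m ≤ n := by exact_mod_cast (show (2 * m : ℝ) ≤ n by linarith)
  rcases Nat.even_or_odd (n - m) with ⟨k, hk⟩ | ⟨k, hk⟩
  · refine ⟨m - 1, k, by omega, ?_, ?_, by omega⟩ <;> rw [Nat.cast_pred (by omega)] <;> linarith
  · exact ⟨m, k, by omega, by linarith, hm_le, by omega⟩

open Filter

theorem eventually_log_large :
    ∀ᶠ x : ℝ in atTop, 2 ≤ log x ∧ log 4 + 1 ≤ log (log x) ∧ 14 * log x ^ 2 ≤ x := by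
  have hlittleO : ∀ᶠ x : ℝ in atTop, ‖log x ^ 2‖ ≤ 14⁻¹ * ‖x‖ :=
    (isLittleO_pow_log_id_atTop (n := 2)).def (by norm_num)
  filter_upwards [tendsto_log_atTop.eventually_ge_atTop 2,
    (tendsto_log_atTop.comp tendsto_log_atTop).eventually_ge_atTop (log 4 + 1), hlittleO,
    eventually_ge_atTop 0] with x hL hlogL hsq hx
  rw [Real.norm_of_nonneg (by positivity), Real.norm_of_nonneg hx] at hsq
  exact ⟨hL, hlogL, by linarith⟩

theorem div_log_bounds {x : ℝ} (hL : 2 ≤ log x) (hx : 14 * log x ^ 2 ≤ x) :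
    14 * log x ≤ x / log x ∧ x / log x ≤ x / 2 := by
  have hL0 : 0 < log x := by linarith
  refine ⟨by rw [le_div_iff₀ hL0]; nlinarith, ?_⟩
  exact div_le_div_of_nonneg_left (by nlinarith) two_pos hL

theorem main_term_le_rpow {x u : ℝ} (hL : 2 ≤ log x) (hlogL : log 4 + 1 ≤ log (log x))
    (hx : 14 * log x ^ 2 ≤ x) (hu₁ : x / log x - 2 ≤ u) (hu₂ : u ≤ x / log x) :
    (4 * x / (exp 1 * log x)) ^ (x / 2) * √(log x) / x ≤ (4 * u) ^ ((x - u) / 2) / (8 * x ^ 2) := by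
  obtain ⟨hr₁, hr₂⟩ := div_log_bounds hL hx
  set L := log x
  set r := x / L
  have hL0 : 0 < L := by linarith
  have hx0 : 0 < x := by nlinarith
  have hu0 : 0 < u := by linarith
  have hrL : r * L = x := div_mul_cancel₀ x hL0.ne'
  have hlog_r : log r = L - log L := log_div hx0.ne' hL0.ne'
  -- rounding `r` down to `u` costs at most `2 L`, far below the slack `(r / 2) (log L - log 4)`
  have hround : (x - r) / 2 * (log r - log u) ≤ 2 * L := by
    have hlog : log r - log u ≤ r / u - 1 := by
      rw [← log_div (by linarith) hu0.ne']; exact log_le_sub_one_of_pos (by positivity)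
    have hdiff : 0 ≤ log r - log u := by linarith [log_le_log hu0 hu₂]
    calc (x - r) / 2 * (log r - log u) ≤ x / 2 * (r / u - 1) := by gcongr; linarith
      _ = x * (r - u) / (2 * u) := by field_simp
      _ ≤ 2 * L := by rw [div_le_iff₀ (by positivity)]; nlinarith
  have hlog_lhs : log ((4 * x / (exp 1 * L)) ^ (x / 2) * √L / x) =
      x / 2 * (log 4 + L - 1 - log L) + log L / 2 - L := by
    rw [log_div (by positivity) hx0.ne', log_mul (by positivity) (by positivity),
      log_rpow (by positivity), log_sqrt hL0.le, log_div (by positivity) (by positivity),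
      log_mul (by norm_num) hx0.ne', log_mul (exp_pos 1).ne' hL0.ne', log_exp]
    ring
  have hlog_rhs : log ((4 * u) ^ ((x - u) / 2) / (8 * x ^ 2)) =
      (x - u) / 2 * (log 4 + log u) - (log 8 + 2 * L) := by
    rw [log_div (by positivity) (by positivity), log_rpow (by positivity),
      log_mul (by norm_num) hu0.ne', log_mul (by norm_num) (by positivity), log_pow]
    push_cast; ring
  rw [← log_le_log_iff (by positivity) (by positivity), hlog_lhs, hlog_rhs]
  have hlog4u : 0 ≤ log 4 + log u := by
    rw [← log_mul (by norm_num) hu0.ne']; exact log_nonneg (by linarith)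
  have hshift : (x - r) / 2 * (log 4 + log u) ≤ (x - u) / 2 * (log 4 + log u) := by
    gcongr
  have hslack : 7 * L ≤ r / 2 * (log L - log 4) := by nlinarith
  have hlogL_le : log L ≤ L - 1 := log_le_sub_one_of_pos hL0
  have hlog8 : log 8 ≤ 7 := by linarith [log_le_sub_one_of_pos (show (0 : ℝ) < 8 by norm_num)]
  have hexpand : (x - r) / 2 * (log 4 + log r) =
      x / 2 * (log 4 + L - log L) - x / 2 + r / 2 * (log L - log 4) := by
    rw [hlog_r, ← hrL]; ring
  linarith

/-- For every `ε > 0` there is `c₁ > 0` such that for all sufficiently large `n`,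
`λ_n ≥ c₁ (4n/(e log n))^{n/2} √(log n) / n`. -/
theorem lambda_lower_bound :
    ∀ ε : ℝ, 0 < ε → ∃ c₁ : ℝ, 0 < c₁ ∧ ∃ N : ℕ, ∀ n : ℕ, N ≤ n →
      (lambdaCount n : ℝ) ≥
        c₁ * (4 * n / (Real.exp 1 * Real.log n)) ^ ((n : ℝ) / 2) *
          Real.sqrt (Real.log n) / n := by
  intro _ _
  refine ⟨1, one_pos, eventually_atTop.mp ?_⟩
  filter_upwards [tendsto_natCast_atTop_atTop.eventually eventually_log_large]
    with n ⟨hL, hlogL, hn⟩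
  obtain ⟨hr₁, hr₂⟩ := div_log_bounds hL hn
  obtain ⟨u, k, hu, hu₁, hu₂, hnuk⟩ :=
    exists_eq_add_two_mul_add_one (n := n) (r := n / log n) (by linarith) hr₂
  rw [one_mul, ge_iff_le]
  exact (main_term_le_rpow hL hlogL hn hu₁ hu₂).trans (rpow_div_le_lambdaCount hnuk hu)
end

section
/- For every ε > 0 there is c_2 > 0 such that for all sufficiently large n, the number λ_n of closed lambda-terms of size n satisfies λ_n ≤ c_2 · (9(1+ε)n/(e log n))^{n/2} · (log n)^{n/(2 log n)} / n^{3/2}. -/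
/-!
A closed term of size `n` is determined by its shape, a word of length `n` over the three node
kinds, together with the list of its de Bruijn indices. If the term has `a` variables and `u`
abstractions then it has `a - 1` applications, so `2 a + u = n + 1`, and every index is `< u`;
hence `λ_n ≤ 3 ^ n · max u ^ a`. The maximum of `(n + 1 - u) log u` is bounded above by the
tangent lines of `log` and of `u ↦ u log u` at points near the maximiser `u ≈ n / log n`;
the bound differs from the claimed exponent by `o(n)`, which the factor `(1 + ε) ^ (n / 2)`
absorbs.
-/

open Real

namespace Lam

-- node kinds in preorder: `0` variable, `1` application, `2` abstraction
def shape : Lam → List (Fin 3)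
  | .var _ => [0]
  | .app s t => 1 :: (s.shape ++ t.shape)
  | .abs t => 2 :: t.shape

def labels : Lam → List ℕ
  | .var k => [k]
  | .app s t => s.labels ++ t.labels
  | .abs t => t.labels

theorem length_shape (t : Lam) : t.shape.length = t.size := by
  induction t <;> grind [shape, size]

theorem length_labels (t : Lam) : t.labels.length = t.shape.count 0 := by
  induction t <;> grind [shape, labels]

theorem count_shape_zero (t : Lam) : t.shape.count 0 = t.shape.count 1 + 1 := by
  induction t <;> grind [shape]

theorem ClosedAt.labels_lt {t : Lam} {m : ℕ} (ht : t.ClosedAt m) :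
    ∀ k ∈ t.labels, k < m + t.shape.count 2 := by
  induction t generalizing m <;> grind [shape, labels, ClosedAt]

theorem eq_of_shape_append_labels_append {t t' : Lam} {w w' : List (Fin 3)} {l l' : List ℕ}
    (hw : t.shape ++ w = t'.shape ++ w') (hl : t.labels ++ l = t'.labels ++ l') :
    t = t' ∧ w = w' ∧ l = l' := by
  induction t generalizing t' w w' l l' with
  | var k =>
    cases t' <;> simp_all [shape, labels]
  | app s t ihs iht =>
    cases t' with
    | app s' t' =>
      simp only [shape, labels, List.cons_append, List.cons.injEq, List.append_assoc, true_and]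
        at hw hl
      obtain ⟨rfl, hw, hl⟩ := ihs hw hl
      obtain ⟨rfl, rfl, rfl⟩ := iht hw hl
      exact ⟨rfl, rfl, rfl⟩
    | _ => simp [shape] at hw
  | abs t ih =>
    cases t' with
    | abs t' =>
      simp only [shape, labels, List.cons_append, List.cons.injEq, true_and] at hw hl
      obtain ⟨rfl, hw, hl⟩ := ih hw hl
      exact ⟨rfl, hw, hl⟩
    | _ => simp [shape] at hw

theorem shape_labels_injective : Function.Injective fun t : Lam => (t.shape, t.labels) :=
  fun _ _ h => (eq_of_shape_append_labels_append (w := []) (w' := []) (l := []) (l' := [])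
    (by simpa using congrArg Prod.fst h) (by simpa using congrArg Prod.snd h)).1

end Lam

def boundedLists (k u : ℕ) : Finset (List ℕ) :=
  Finset.univ.image fun v : List.Vector (Fin u) k => v.toList.map Fin.val

theorem mem_boundedLists {k u : ℕ} {l : List ℕ} :
    l ∈ boundedLists k u ↔ l.length = k ∧ ∀ x ∈ l, x < u := by
  constructor
  · intro hl
    obtain ⟨v, -, rfl⟩ := Finset.mem_image.mp hl
    simp
  · rintro ⟨hk, hu⟩
    exact Finset.mem_image.mpr ⟨⟨l.pmap Fin.mk hu, by simp [hk]⟩, Finset.mem_univ _, by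
      simp [List.map_pmap]⟩

theorem card_boundedLists_le (k u : ℕ) : (boundedLists k u).card ≤ u ^ k :=
  Finset.card_image_le.trans (by simp)

def closedShapes (n : ℕ) : Finset (List.Vector (Fin 3) n) :=
  {s | s.toList.count 0 = s.toList.count 1 + 1}

def closedCodes (n : ℕ) : Finset (List (Fin 3) × List ℕ) :=
  (closedShapes n).biUnion fun s =>
    (boundedLists (s.toList.count 0) (s.toList.count 2)).image (Prod.mk s.toList)

theorem Lam.mem_closedCodes {t : Lam} (ht : t.Closed) :
    (t.shape, t.labels) ∈ closedCodes t.size :=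
  Finset.mem_biUnion.mpr ⟨⟨t.shape, t.length_shape⟩,
    Finset.mem_filter.mpr ⟨Finset.mem_univ _, t.count_shape_zero⟩,
    Finset.mem_image_of_mem _ (mem_boundedLists.mpr
      ⟨t.length_labels, fun k hk => by simpa using ht.labels_lt k hk⟩)⟩

theorem List.count_fin_three (l : List (Fin 3)) :
    l.count 0 + l.count 1 + l.count 2 = l.length := by
  simpa [Fin.sum_univ_three] using
    Multiset.sum_count_eq_card (s := Finset.univ) (m := (l : Multiset (Fin 3))) (by simp)

theorem card_closedCodes_le (n : ℕ) {R : ℝ}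
    (hR : ∀ a u : ℕ, 2 * a + u = n + 1 → (u : ℝ) ^ a ≤ R) :
    ((closedCodes n).card : ℝ) ≤ 3 ^ n * R := by
  have hR₀ : 0 ≤ R := zero_le_one.trans (by simpa using hR 0 (n + 1) (by ring))
  have hfibre : ∀ s ∈ closedShapes n, (s.toList.count 2 : ℝ) ^ s.toList.count 0 ≤ R := by
    intro s hs
    have hlen := s.toList.count_fin_three
    have hvars := (Finset.mem_filter.mp hs).2
    rw [s.toList_length] at hlen
    exact hR _ _ (by omega)
  have hcodes :
      (closedCodes n).card ≤ ∑ s ∈ closedShapes n, s.toList.count 2 ^ s.toList.count 0 :=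
    Finset.card_biUnion_le.trans <| Finset.sum_le_sum fun s _ =>
      Finset.card_image_le.trans (card_boundedLists_le _ _)
  have hshapes : ((closedShapes n).card : ℝ) ≤ 3 ^ n := by
    exact_mod_cast (Finset.card_filter_le _ _).trans (by simp)
  calc ((closedCodes n).card : ℝ)
      ≤ ∑ s ∈ closedShapes n, (s.toList.count 2 : ℝ) ^ s.toList.count 0 := by
        exact_mod_cast hcodes
    _ ≤ (closedShapes n).card * R := by simpa using Finset.sum_le_sum hfibre
    _ ≤ 3 ^ n * R := mul_le_mul_of_nonneg_right hshapes hR₀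

theorem lambdaCount_le (n : ℕ) {R : ℝ}
    (hR : ∀ a u : ℕ, 2 * a + u = n + 1 → (u : ℝ) ^ a ≤ R) :
    (lambdaCount n : ℝ) ≤ 3 ^ n * R := by
  have : lambdaCount n ≤ (closedCodes n).card := by
    rw [lambdaCount, ← Nat.card_eq_finsetCard]
    exact Nat.card_le_card_of_injective
      (fun t => ⟨(t.1.shape, t.1.labels), by simpa [t.2.2] using Lam.mem_closedCodes t.2.1⟩)
      fun t t' h => Subtype.ext (Lam.shape_labels_injective (congrArg Subtype.val h))
  exact (Nat.cast_le.mpr this).trans (card_closedCodes_le n hR)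

open Filter Topology

theorem Real.sub_mul_log_le (N u c : ℝ) (hN : 0 < N) (hu : 0 < u) (hc : 0 < c)
    (hK : 0 < 1 + log c) :
    (N - u) * log u ≤ N * (log (N / (1 + log c)) - 1) + c := by
  set s := N / (1 + log c)
  have hs : 0 < s := div_pos hN hK
  -- tangent lines of the concave `log` at `s` and of the convex `u ↦ u log u` at `c`;
  -- `s` is chosen so that the terms linear in `u` cancel
  have hconcave : log u ≤ log s + u / s - 1 := by
    have := log_le_sub_one_of_pos (div_pos hu hs)
    rw [log_div hu.ne' hs.ne'] at this
    linarith
  have hconvex : u * log c + u - c ≤ u * log u := by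
    have := mul_le_mul_of_nonneg_left (log_le_sub_one_of_pos (div_pos hc hu)) hu.le
    rw [log_div hc.ne' hu.ne', mul_sub_one, mul_div_cancel₀ _ hu.ne'] at this
    linarith
  have hNs : N * (u / s) = u * (1 + log c) := by
    simp only [s]; field_simp
  nlinarith [mul_le_mul_of_nonneg_left hconcave hN.le]

theorem Real.one_lt_log_of_three_le {x : ℝ} (hx : 3 ≤ x) : 1 < log x := by
  rw [lt_log_iff_exp_lt (by linarith)]
  linarith [exp_one_lt_d9]

theorem add_one_sub_mul_log_le (x u : ℝ) (hx : 3 ≤ x) (hu : 0 < u) (hux : u ≤ x + 1) :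
    (x + 1 - u) * log u ≤
      x * (log x - log (1 + log x - log (log x)) - 1) + x / log x + 2 * log x := by
  have hx₀ : 0 < x := by linarith
  have hL : 1 < log x := Real.one_lt_log_of_three_le hx
  have hLL : log (log x) ≤ log x - 1 := Real.log_le_sub_one_of_pos (by linarith)
  have hc : log (x / log x) = log x - log (log x) := Real.log_div hx₀.ne' (by linarith)
  have htangent := Real.sub_mul_log_le x u (x / log x) hx₀ hu (div_pos hx₀ (by linarith))
    (by linarith)
  rw [hc, ← add_sub_assoc, Real.log_div hx₀.ne' (by linarith)] at htangent
  have hlog_u : log u ≤ 2 * log x := by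
    calc log u ≤ log (x ^ 2) := Real.log_le_log hu (by nlinarith)
      _ = 2 * log x := by simp
  linarith

theorem tendsto_log_sub_log_one_add_sub_log :
    Tendsto (fun y => log y - log (1 + y - log y)) atTop (𝓝 0) := by
  have hlin : Tendsto (fun y => 1 / y + 1 - log y / y) atTop (𝓝 1) := by
    simpa using (tendsto_inv_atTop_zero.add_const 1).sub
      Real.isLittleO_log_id_atTop.tendsto_div_nhds_zero
  have := ((Real.continuousAt_log one_ne_zero).tendsto.comp hlin).neg
  rw [Real.log_one, neg_zero] at this
  refine this.congr' ?_
  filter_upwards [eventually_gt_atTop 0] with y hy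
  have hK : 0 < 1 + y - log y := by linarith [Real.log_le_sub_one_of_pos hy]
  have : 1 / y + 1 - log y / y = (1 + y - log y) / y := by field_simp
  simp only [Function.comp, this, Real.log_div hK.ne' hy.ne']
  ring

theorem eventually_tangent_error_le {δ : ℝ} (hδ : 0 < δ) :
    ∀ᶠ x in atTop,
      x * (log (log x) - log (1 + log x - log (log x))) + x / log x + 5 * log x ≤ δ * x := by
  have hlim : Tendsto (fun x => (log (log x) - log (1 + log x - log (log x))) + (log x)⁻¹
      + 5 * (log x / x)) atTop (𝓝 0) := by
    simpa using (tendsto_log_sub_log_one_add_sub_log.comp Real.tendsto_log_atTop).add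
      Real.tendsto_log_atTop.inv_tendsto_atTop |>.add
      (Real.isLittleO_log_id_atTop.tendsto_div_nhds_zero.const_mul 5)
  filter_upwards [hlim.eventually (eventually_le_nhds hδ), eventually_gt_atTop 0] with x hx hx₀
  have := mul_le_mul_of_nonneg_left hx hx₀.le
  field_simp at this ⊢
  linarith

noncomputable def labellingBound (ε x : ℝ) : ℝ :=
  ((1 + ε) * x / (exp 1 * log x)) ^ (x / 2) * log x ^ (x / (2 * log x)) / x ^ ((3 : ℝ) / 2)

section labellingBound

variable {ε x : ℝ}

theorem labellingBound_pos (hε : 0 < 1 + ε) (hx : 1 < x) : 0 < labellingBound ε x := by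
  have hL : 0 < log x := Real.log_pos hx
  unfold labellingBound
  positivity

theorem log_labellingBound (hε : 0 < 1 + ε) (hx : 1 < x) :
    log (labellingBound ε x) = x / 2 * (log (1 + ε) + log x - 1 - log (log x))
      + x / (2 * log x) * log (log x) - 3 / 2 * log x := by
  have hx₀ : 0 < x := by linarith
  have hL : 0 < log x := Real.log_pos hx
  have hbase : 0 < (1 + ε) * x / (exp 1 * log x) := by positivity
  rw [labellingBound, Real.log_div (by positivity) (by positivity),
    Real.log_mul (by positivity) (by positivity), Real.log_rpow hbase, Real.log_rpow hL,
    Real.log_rpow hx₀, Real.log_div (by positivity) (by positivity),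
    Real.log_mul hε.ne' hx₀.ne', Real.log_mul (exp_pos 1).ne' hL.ne', Real.log_exp]
  ring

theorem three_pow_mul_labellingBound (hε : 0 ≤ 1 + ε) (n : ℕ) :
    3 ^ n * labellingBound ε n =
      (9 * (1 + ε) * n / (exp 1 * log n)) ^ ((n : ℝ) / 2) *
        log n ^ ((n : ℝ) / (2 * log n)) / (n : ℝ) ^ ((3 : ℝ) / 2) := by
  have hbase : 0 ≤ (1 + ε) * n / (exp 1 * log n) := by
    have := Real.log_natCast_nonneg n
    positivity
  have hnine : (9 : ℝ) ^ ((n : ℝ) / 2) = 3 ^ n := by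
    rw [show (9 : ℝ) = 3 ^ (2 : ℝ) by norm_num, ← Real.rpow_mul (by norm_num),
      mul_div_cancel₀ _ two_ne_zero, Real.rpow_natCast]
  rw [labellingBound, mul_assoc 9, mul_div_assoc 9, Real.mul_rpow (by norm_num) hbase, hnine]
  ring

end labellingBound

theorem eventually_pow_le_labellingBound {ε : ℝ} (hε : 0 < ε) :
    ∀ᶠ n : ℕ in atTop, ∀ a u : ℕ, 2 * a + u = n + 1 →
      (u : ℝ) ^ a ≤ labellingBound ε n := by
  have hε' : 0 < log (1 + ε) := Real.log_pos (by linarith)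
  filter_upwards [tendsto_natCast_atTop_atTop.eventually (eventually_tangent_error_le hε'),
    eventually_ge_atTop 3] with n herror hn₃ a u hau
  have hn : (3 : ℝ) ≤ n := by exact_mod_cast hn₃
  have hL : 1 < log n := Real.one_lt_log_of_three_le hn
  have hR := labellingBound_pos (by linarith : 0 < 1 + ε) (by linarith : (1 : ℝ) < n)
  rcases u.eq_zero_or_pos with rfl | hu
  · rw [Nat.cast_zero, zero_pow (by omega)]
    exact hR.le
  have hu : (0 : ℝ) < u := by exact_mod_cast hu
  have hau : 2 * (a : ℝ) = n + 1 - u := by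
    rw [eq_sub_iff_add_eq]
    exact_mod_cast hau
  rw [← Real.log_le_log_iff (by positivity) hR, Real.log_pow,
    log_labellingBound (by linarith) (by linarith)]
  have hmax := add_one_sub_mul_log_le n u hn hu (by linarith)
  have hLL : 0 ≤ n / (2 * log n) * log (log n) :=
    mul_nonneg (by positivity) (Real.log_nonneg hL.le)
  linear_combination (log u / 2) * hau + hmax / 2 + herror / 2 + hLL

/-- For every `ε > 0` there is `c₂ > 0` such that for all sufficiently large `n`,
`λ_n ≤ c₂ (9(1+ε)n/(e log n))^{n/2} (log n)^{n/(2 log n)} / n^{3/2}`. -/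
theorem lambda_upper_bound :
    ∀ ε : ℝ, 0 < ε → ∃ c₂ : ℝ, 0 < c₂ ∧ ∃ N : ℕ, ∀ n : ℕ, N ≤ n →
      (lambdaCount n : ℝ) ≤
        c₂ * (9 * (1 + ε) * n / (Real.exp 1 * Real.log n)) ^ ((n : ℝ) / 2) *
          (Real.log n) ^ ((n : ℝ) / (2 * Real.log n)) / (n : ℝ) ^ ((3 : ℝ) / 2) := by
  intro ε hε
  obtain ⟨N, hN⟩ := (eventually_pow_le_labellingBound hε).exists_forall_of_atTop
  refine ⟨1, one_pos, N, fun n hn => ?_⟩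
  rw [one_mul, ← three_pow_mul_labellingBound (by linarith)]
  exact lambdaCount_le n (hN n hn)
end
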